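/- arXiv:2006.06439 — 11 statements merged into one kernel-verified Lean document; each statement's English description precedes it below -/
import Mathlib

section
/- If 0 < x ≤ min((αβ)^(1/β), 1) then the second derivative of log f(x | α, β) is nonpositive; in particular log f is concave on (0, min((αβ)^(1/β), 1)]. -/
/-!
After clearing the logarithm, `log f(y) = log (αβ) + α - α y^(-β) - (1 + β) log y`, whose second
derivative is `(1 + β) y⁻² (1 - αβ y^(-β))`. This is nonpositive exactly when `y^β ≤ αβ`, i.e. for
`y ≤ (αβ)^(1/β)`, and concavity on that interval follows from the second-derivative test.
-/

open Real Filter Topology Set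

namespace UnitGompertz

variable {α β x : ℝ}

noncomputable def logPdf (α β y : ℝ) : ℝ :=
  log (α * β * exp (-α * (1 / y ^ β - 1)) / y ^ (1 + β))

lemma logPdf_eq (hαβ : α * β ≠ 0) {y : ℝ} (hy : 0 < y) :
    logPdf α β y = log (α * β) + α - α * y ^ (-β) - (1 + β) * log y := by
  rw [logPdf, log_div (by positivity) (rpow_pos_of_pos hy _).ne', log_mul hαβ (exp_ne_zero _),
    log_exp, log_rpow hy, rpow_neg hy.le]
  ring

lemma hasDerivAt_logPdf (hαβ : α * β ≠ 0) (hx : 0 < x) :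
    HasDerivAt (logPdf α β) (α * β * x ^ (-β - 1) - (1 + β) * x⁻¹) x := by
  have hpow : HasDerivAt (fun y : ℝ => y ^ (-β)) (-β * x ^ (-β - 1)) x :=
    hasDerivAt_rpow_const (Or.inl hx.ne')
  have hexpanded := ((hasDerivAt_const x (log (α * β) + α)).sub (hpow.const_mul α)).sub
    ((hasDerivAt_log hx.ne').const_mul (1 + β))
  refine (hexpanded.congr_deriv (by ring)).congr_of_eventuallyEq ?_
  filter_upwards [Ioi_mem_nhds hx] with y hy using logPdf_eq hαβ hy

lemma hasDerivAt_deriv_logPdf (hαβ : α * β ≠ 0) (hx : 0 < x) :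
    HasDerivAt (deriv (logPdf α β)) ((1 + β) * (x ^ 2)⁻¹ * (1 - α * β * x ^ (-β))) x := by
  have hpow : HasDerivAt (fun y : ℝ => y ^ (-β - 1)) ((-β - 1) * x ^ (-β - 1 - 1)) x :=
    hasDerivAt_rpow_const (Or.inl hx.ne')
  have hsplit : x ^ (-β - 1 - 1) = x ^ (-β) * (x ^ 2)⁻¹ := by
    rw [sub_sub, rpow_sub hx, div_eq_mul_inv, show (1 + 1 : ℝ) = (2 : ℕ) by norm_num,
      rpow_natCast]
  have hscore := (hpow.const_mul (α * β)).sub ((hasDerivAt_inv hx.ne').const_mul (1 + β))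
  refine (hscore.congr_deriv (by rw [hsplit]; ring)).congr_of_eventuallyEq ?_
  filter_upwards [Ioi_mem_nhds hx] with y hy using (hasDerivAt_logPdf hαβ hy).deriv

lemma deriv2_logPdf_nonpos (hβ : -1 ≤ β) (hx : 0 < x) (hxβ : x ^ β ≤ α * β) :
    deriv (deriv (logPdf α β)) x ≤ 0 := by
  have hxβ_pos : 0 < x ^ β := rpow_pos_of_pos hx β
  have hαβ : 0 < α * β := hxβ_pos.trans_le hxβ
  have hone : 1 ≤ α * β * x ^ (-β) := by
    rwa [rpow_neg hx.le, ← div_eq_mul_inv, one_le_div hxβ_pos]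
  rw [(hasDerivAt_deriv_logPdf hαβ.ne' hx).deriv]
  exact mul_nonpos_of_nonneg_of_nonpos (mul_nonneg (by linarith) (by positivity)) (by linarith)

end UnitGompertz

open UnitGompertz in
theorem unitGompertz_log_concave_region (α β : ℝ) (hα : 0 < α) (hβ : 0 < β) :
    (∀ x : ℝ, 0 < x → x ≤ min ((α * β) ^ (1 / β)) 1 →
      deriv (deriv (fun y : ℝ =>
          Real.log (α * β * Real.exp (-α * (1 / y ^ β - 1)) / y ^ (1 + β)))) x ≤ 0) ∧
    ConcaveOn ℝ (Set.Ioc (0:ℝ) (min ((α * β) ^ (1 / β)) 1))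
      (fun y : ℝ => Real.log (α * β * Real.exp (-α * (1 / y ^ β - 1)) / y ^ (1 + β))) := by
  change (∀ x : ℝ, 0 < x → _ → deriv (deriv (logPdf α β)) x ≤ 0) ∧ ConcaveOn ℝ _ (logPdf α β)
  have hαβ : 0 < α * β := mul_pos hα hβ
  have hnonpos : ∀ x : ℝ, 0 < x → x ≤ min ((α * β) ^ (1 / β)) 1 →
      deriv (deriv (logPdf α β)) x ≤ 0 := by
    intro x hx hxm
    have hx_le : x ≤ (α * β) ^ β⁻¹ := one_div β ▸ hxm.trans (min_le_left _ _)
    exact deriv2_logPdf_nonpos (by linarith) hx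
      ((le_rpow_inv_iff_of_pos hx.le hαβ.le hβ).1 hx_le)
  refine ⟨hnonpos, concaveOn_of_deriv2_nonpos' (convex_Ioc _ _) ?_ ?_ ?_⟩
  · exact fun x hx => (hasDerivAt_logPdf hαβ.ne' hx.1).differentiableAt.differentiableWithinAt
  · exact fun x hx =>
      (hasDerivAt_deriv_logPdf hαβ.ne' hx.1).differentiableAt.differentiableWithinAt
  · exact fun x hx => hnonpos x hx.1 hx.2
end

section
/- For α = 1/4 and β = 1, the second derivative of log f(x | α, β) at x = 1/2 is strictly positive; hence the unit-Gompertz density is not log-concave on all of (0,1) in general. -/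
open Real

private noncomputable def ugF : ℝ → ℝ := fun y : ℝ =>
  Real.log ((1/4 : ℝ) * 1 * Real.exp (-(1/4 : ℝ) * (1 / y ^ (1:ℝ) - 1)) / y ^ (1 + (1:ℝ)))

private noncomputable def ugL : ℝ → ℝ := fun y : ℝ =>
  Real.log (1/4) + (-(1/4 : ℝ) * (y⁻¹ - 1)) - 2 * Real.log y

private noncomputable def ugG : ℝ → ℝ := fun y : ℝ => (1/4 : ℝ) * (y^2)⁻¹ - 2 * y⁻¹

private lemma ugF_eq {y : ℝ} (hy : 0 < y) : ugF y = ugL y := by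
  have hy2 : (y : ℝ) ^ ((1:ℝ) + 1) = y ^ 2 := by
    rw [show ((1:ℝ)+1) = ((2:ℕ):ℝ) by norm_num, Real.rpow_natCast]
  unfold ugF ugL
  rw [Real.rpow_one, hy2, mul_one, one_div y]
  rw [Real.log_div (by positivity) (by positivity), Real.log_mul (by norm_num) (Real.exp_ne_zero _),
    Real.log_exp, Real.log_pow]
  push_cast
  ring

private lemma ugL_hasDeriv {y : ℝ} (hy : y ≠ 0) : HasDerivAt ugL (ugG y) y := by
  have h1 : HasDerivAt (fun x : ℝ => x⁻¹) (-(y^2)⁻¹) y := hasDerivAt_inv hy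
  have h2 : HasDerivAt Real.log y⁻¹ y := Real.hasDerivAt_log hy
  have : HasDerivAt ugL (0 + (-(1/4 : ℝ)) * (-(y^2)⁻¹) - 2 * y⁻¹) y :=
    ((hasDerivAt_const y (Real.log (1/4))).add
      (((h1.sub_const 1)).const_mul (-(1/4:ℝ)))).sub (h2.const_mul 2)
  convert this using 1
  unfold ugG; ring

private lemma ugG_hasDeriv {y : ℝ} (hy : y ≠ 0) :
    HasDerivAt ugG ((1/4 : ℝ) * (-(2*y^1) / (y^2)^2) - 2 * (-(y^2)⁻¹)) y := by
  have h1 : HasDerivAt (fun x : ℝ => (x^2)⁻¹) (-(2*y^1) / (y^2)^2) y :=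
    (hasDerivAt_pow 2 y).inv (pow_ne_zero _ hy)
  have h2 : HasDerivAt (fun x : ℝ => x⁻¹) (-(y^2)⁻¹) y := hasDerivAt_inv hy
  exact (h1.const_mul _).sub (h2.const_mul 2)

private lemma ugF_eventually : ugF =ᶠ[nhds (1/2 : ℝ)] ugL := by
  filter_upwards [isOpen_Ioi.mem_nhds (show (0:ℝ) < 1/2 by norm_num)] with y hy
  exact ugF_eq hy

theorem unitGompertz_not_logConcave_counterexample :
    0 < deriv (deriv (fun y : ℝ =>
        Real.log ((1/4 : ℝ) * 1 * Real.exp (-(1/4 : ℝ) * (1 / y ^ (1:ℝ) - 1)) / y ^ (1 + (1:ℝ))))) (1/2) ∧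
    ¬ ConcaveOn ℝ (Set.Ioo (0:ℝ) 1)
      (fun y : ℝ =>
        Real.log ((1/4 : ℝ) * 1 * Real.exp (-(1/4 : ℝ) * (1 / y ^ (1:ℝ) - 1)) / y ^ (1 + (1:ℝ)))) := by
  have hfun : (fun y : ℝ =>
      Real.log ((1/4 : ℝ) * 1 * Real.exp (-(1/4 : ℝ) * (1 / y ^ (1:ℝ) - 1)) / y ^ (1 + (1:ℝ)))) = ugF := rfl
  rw [hfun]
  have hderivL : deriv ugL =ᶠ[nhds (1/2 : ℝ)] ugG := by
    filter_upwards [isOpen_Ioi.mem_nhds (show (0:ℝ) < 1/2 by norm_num)] with y hy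
    exact (ugL_hasDeriv (ne_of_gt hy)).deriv
  have hderivF : deriv ugF =ᶠ[nhds (1/2 : ℝ)] ugG := ugF_eventually.deriv.trans hderivL
  constructor
  · have : deriv (deriv ugF) (1/2) = deriv ugG (1/2) := hderivF.deriv_eq
    rw [this, (ugG_hasDeriv (by norm_num : (1/2:ℝ) ≠ 0)).deriv]
    norm_num
  · intro h
    have hdiff : ∀ x ∈ Set.Ioo (0:ℝ) 1, DifferentiableAt ℝ ugF x := by
      intro x hx
      have hev : ugF =ᶠ[nhds x] ugL := by
        filter_upwards [isOpen_Ioi.mem_nhds hx.1] with y hy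
        exact ugF_eq hy
      exact (ugL_hasDeriv (ne_of_gt hx.1)).differentiableAt.congr_of_eventuallyEq hev
    have hanti := h.antitoneOn_deriv hdiff
    have h14 : (1/4 : ℝ) ∈ Set.Ioo (0:ℝ) 1 := by norm_num
    have h12 : (1/2 : ℝ) ∈ Set.Ioo (0:ℝ) 1 := by norm_num
    have hle := hanti h14 h12 (by norm_num)
    have e1 : deriv ugF (1/4) = ugG (1/4) := by
      have hev : ugF =ᶠ[nhds (1/4:ℝ)] ugL := by
        filter_upwards [isOpen_Ioi.mem_nhds (show (0:ℝ) < 1/4 by norm_num)] with y hy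
        exact ugF_eq hy
      rw [hev.deriv_eq, (ugL_hasDeriv (by norm_num : (1/4:ℝ) ≠ 0)).deriv]
    have e2 : deriv ugF (1/2) = ugG (1/2) := hderivF.self_of_nhds
    rw [e1, e2] at hle
    unfold ugG at hle
    norm_num at hle
end

section
/- If (αβ/(1+β))^(1/β) ≤ 1, then x* = (αβ/(1+β))^(1/β) is the unique critical point of f(x | α, β) on (0,1), and f is increasing on (0, x*) and decreasing on (x*, 1). -/
open Real Set

/-! The logarithmic derivative of the density is `(α β - (1 + β) x ^ β) / x ^ (1 + β)`, whose sign
is that of `x* ^ β - x ^ β`, i.e. of `x* - x`, since `x* ^ β = α β / (1 + β)`. -/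

noncomputable def unitGompertzPdf (α β x : ℝ) : ℝ :=
  α * β * exp (-α * (1 / x ^ β - 1)) / x ^ (1 + β)

noncomputable def unitGompertzMode (α β : ℝ) : ℝ :=
  (α * β / (1 + β)) ^ (1 / β)

section

variable {α β : ℝ}

theorem unitGompertzPdf_pos (hα : 0 < α) (hβ : 0 < β) {x : ℝ} (hx : 0 < x) :
    0 < unitGompertzPdf α β x := by
  unfold unitGompertzPdf
  have := rpow_pos_of_pos hx (1 + β)
  positivity

theorem hasDerivAt_unitGompertzPdf {x : ℝ} (hx : 0 < x) :
    HasDerivAt (unitGompertzPdf α β)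
      (unitGompertzPdf α β x * ((α * β - (1 + β) * x ^ β) / x ^ (1 + β))) x := by
  have hxβ : x ^ β ≠ 0 := (rpow_pos_of_pos hx β).ne'
  have hpow (γ : ℝ) : HasDerivAt (fun y : ℝ => y ^ γ) (γ * x ^ (γ - 1)) x :=
    hasDerivAt_rpow_const (Or.inl hx.ne')
  have hexp := ((((hpow β).fun_inv hxβ).sub_const 1).const_mul (-α)).exp.const_mul (α * β)
  have hfun :
      unitGompertzPdf α β = fun y => α * β * exp (-α * ((y ^ β)⁻¹ - 1)) / y ^ (1 + β) := by
    funext y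
    simp only [unitGompertzPdf, one_div]
  rw [hfun]
  refine (hexp.fun_div (hpow (1 + β)) (rpow_pos_of_pos hx _).ne').congr_deriv ?_
  beta_reduce
  rw [rpow_sub hx, rpow_add hx, add_sub_cancel_left, rpow_one]
  field_simp

theorem continuousOn_unitGompertzPdf : ContinuousOn (unitGompertzPdf α β) (Ioi 0) :=
  fun _ hx => (hasDerivAt_unitGompertzPdf hx).continuousAt.continuousWithinAt

theorem unitGompertzMode_pos (hα : 0 < α) (hβ : 0 < β) : 0 < unitGompertzMode α β :=
  rpow_pos_of_pos (by positivity) _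

theorem unitGompertzMode_rpow (hα : 0 < α) (hβ : 0 < β) :
    unitGompertzMode α β ^ β = α * β / (1 + β) := by
  rw [unitGompertzMode, one_div]
  exact rpow_inv_rpow (by positivity) hβ.ne'

theorem exists_pos_deriv_unitGompertzPdf_eq (hα : 0 < α) (hβ : 0 < β) {x : ℝ} (hx : 0 < x) :
    ∃ c > 0, deriv (unitGompertzPdf α β) x = c * (unitGompertzMode α β ^ β - x ^ β) := by
  refine ⟨unitGompertzPdf α β x * (1 + β) / x ^ (1 + β), ?_, ?_⟩
  · have := unitGompertzPdf_pos hα hβ hx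
    have := rpow_pos_of_pos hx (1 + β)
    positivity
  · rw [(hasDerivAt_unitGompertzPdf hx).deriv, unitGompertzMode_rpow hα hβ]
    field_simp

theorem deriv_unitGompertzPdf_pos_iff (hα : 0 < α) (hβ : 0 < β) {x : ℝ} (hx : 0 < x) :
    0 < deriv (unitGompertzPdf α β) x ↔ x < unitGompertzMode α β := by
  obtain ⟨c, hc, hderiv⟩ := exists_pos_deriv_unitGompertzPdf_eq hα hβ hx
  rw [hderiv, mul_pos_iff_of_pos_left hc, sub_pos,
    rpow_lt_rpow_iff hx.le (unitGompertzMode_pos hα hβ).le hβ]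

theorem deriv_unitGompertzPdf_neg_iff (hα : 0 < α) (hβ : 0 < β) {x : ℝ} (hx : 0 < x) :
    deriv (unitGompertzPdf α β) x < 0 ↔ unitGompertzMode α β < x := by
  obtain ⟨c, hc, hderiv⟩ := exists_pos_deriv_unitGompertzPdf_eq hα hβ hx
  rw [hderiv, ← neg_pos, ← mul_neg, mul_pos_iff_of_pos_left hc, neg_sub, sub_pos,
    rpow_lt_rpow_iff (unitGompertzMode_pos hα hβ).le hx.le hβ]

theorem deriv_unitGompertzPdf_eq_zero_iff (hα : 0 < α) (hβ : 0 < β) {x : ℝ} (hx : 0 < x) :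
    deriv (unitGompertzPdf α β) x = 0 ↔ x = unitGompertzMode α β := by
  rw [← not_iff_not, ← Ne, ← Ne, ne_iff_lt_or_gt, ne_iff_lt_or_gt,
    deriv_unitGompertzPdf_neg_iff hα hβ hx, deriv_unitGompertzPdf_pos_iff hα hβ hx, or_comm]

end

theorem unitGompertz_mode_interior_general (α β : ℝ) (hα : 0 < α) (hβ : 0 < β) :
    let f : ℝ → ℝ := fun y => α * β * Real.exp (-α * (1 / y ^ β - 1)) / y ^ (1 + β)
    let xstar : ℝ := (α * β / (1 + β)) ^ (1 / β)
    deriv f xstar = 0 ∧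
    (∀ x ∈ Set.Ioo (0:ℝ) 1, deriv f x = 0 → x = xstar) ∧
    StrictMonoOn f (Set.Ioo (0:ℝ) xstar) ∧
    StrictAntiOn f (Set.Ioo xstar 1) := by
  intro f xstar
  have hmode : 0 < unitGompertzMode α β := unitGompertzMode_pos hα hβ
  refine ⟨(deriv_unitGompertzPdf_eq_zero_iff hα hβ hmode).2 rfl,
    fun x hx => (deriv_unitGompertzPdf_eq_zero_iff hα hβ hx.1).1, ?_, ?_⟩
  · refine strictMonoOn_of_deriv_pos (convex_Ioo 0 _)
      (continuousOn_unitGompertzPdf.mono Ioo_subset_Ioi_self) fun x hx => ?_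
    rw [interior_Ioo] at hx
    exact (deriv_unitGompertzPdf_pos_iff hα hβ hx.1).2 hx.2
  · refine strictAntiOn_of_deriv_neg (convex_Ioo _ 1)
      (continuousOn_unitGompertzPdf.mono fun x hx => hmode.trans hx.1) fun x hx => ?_
    rw [interior_Ioo] at hx
    exact (deriv_unitGompertzPdf_neg_iff hα hβ (hmode.trans hx.1)).2 hx.1

theorem unitGompertz_mode_interior (α β : ℝ) (hα : 0 < α) (hβ : 0 < β)
    (h : (α * β / (1 + β)) ^ (1 / β) ≤ 1) :
    let f : ℝ → ℝ := fun y => α * β * Real.exp (-α * (1 / y ^ β - 1)) / y ^ (1 + β)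
    let xstar : ℝ := (α * β / (1 + β)) ^ (1 / β)
    deriv f xstar = 0 ∧
    (∀ x ∈ Set.Ioo (0:ℝ) 1, deriv f x = 0 → x = xstar) ∧
    StrictMonoOn f (Set.Ioo (0:ℝ) xstar) ∧
    StrictAntiOn f (Set.Ioo xstar 1) :=
  unitGompertz_mode_interior_general α β hα hβ
end

section
/- If (αβ/(1+β))^(1/β) > 1, then f(x | α, β) is strictly increasing on (0,1), so the density attains its supremum at the right endpoint x = 1. -/
/-!
Writing the density as `exp g` with `g y = log (αβ) - α (y^{-β} - 1) - (1 + β) log y`, one gets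
`g' y = (αβ y^{-β} - (1 + β)) / y`. On `(0, 1]` we have `y^{-β} ≥ 1`, and the hypothesis says
exactly `αβ > 1 + β`, so `g' > 0` there. Hence the density increases strictly on `(0, 1]`, and
being continuous at `1` its supremum over `(0, 1)` is its value at `1`.
-/

open Real Set Filter Topology

noncomputable section

namespace UnitGompertz

def pdf (α β y : ℝ) : ℝ :=
  α * β * exp (-α * (1 / y ^ β - 1)) / y ^ (1 + β)

def logPDF (α β y : ℝ) : ℝ :=
  log (α * β) - α * ((y ^ β)⁻¹ - 1) - (1 + β) * log y

theorem hasDerivAt_logPDF (α β : ℝ) {y : ℝ} (hy : 0 < y) :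
    HasDerivAt (logPDF α β) ((α * β / y ^ β - (1 + β)) / y) y := by
  have hpow : HasDerivAt (fun t : ℝ => t ^ β) (β * y ^ (β - 1)) y :=
    hasDerivAt_rpow_const (Or.inl hy.ne')
  have hsum := ((((hpow.inv (rpow_pos_of_pos hy β).ne').sub_const 1).const_mul α).const_sub
    (log (α * β))).sub ((hasDerivAt_log hy.ne').const_mul (1 + β))
  refine hsum.congr_deriv ?_
  rw [rpow_sub hy, rpow_one]
  field_simp

theorem strictMonoOn_logPDF {α β : ℝ} (hβ : 0 < β) (hαβ : 1 + β < α * β) :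
    StrictMonoOn (logPDF α β) (Ioc 0 1) := by
  apply strictMonoOn_of_deriv_pos (convex_Ioc 0 1)
  · exact fun y hy => (hasDerivAt_logPDF α β hy.1).continuousAt.continuousWithinAt
  · intro y hy
    rw [interior_Ioc] at hy
    rw [(hasDerivAt_logPDF α β hy.1).deriv]
    have hpow_pos : 0 < y ^ β := rpow_pos_of_pos hy.1 β
    have hpow_le : y ^ β ≤ 1 := rpow_le_one hy.1.le hy.2.le hβ.le
    have : α * β ≤ α * β / y ^ β := by
      rw [le_div_iff₀ hpow_pos]
      nlinarith
    exact div_pos (by linarith) hy.1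

theorem exp_logPDF {α β y : ℝ} (hαβ : 0 < α * β) (hy : 0 < y) :
    exp (logPDF α β y) = pdf α β y := by
  rw [logPDF, pdf, exp_sub, exp_sub, exp_log hαβ, mul_comm (1 + β), ← rpow_def_of_pos hy,
    one_div, neg_mul, exp_neg, div_eq_mul_inv (α * β)]

theorem strictMonoOn_pdf {α β : ℝ} (hβ : 0 < β) (hαβ : 1 + β < α * β) :
    StrictMonoOn (pdf α β) (Ioc 0 1) := by
  have hαβ_pos : 0 < α * β := by linarith
  intro x hx y hy hxy
  rw [← exp_logPDF hαβ_pos hx.1, ← exp_logPDF hαβ_pos hy.1]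
  exact exp_lt_exp.mpr (strictMonoOn_logPDF hβ hαβ hx hy hxy)

theorem continuousAt_pdf (α β : ℝ) {y : ℝ} (hy : 0 < y) : ContinuousAt (pdf α β) y := by
  have hpow (p : ℝ) : ContinuousAt (fun t : ℝ => t ^ p) y :=
    continuousAt_rpow_const y p (Or.inl hy.ne')
  exact (continuousAt_const.mul ((continuousAt_const.mul ((continuousAt_const.div (hpow β)
    (rpow_pos_of_pos hy β).ne').sub continuousAt_const)).rexp)).div (hpow (1 + β))
    (rpow_pos_of_pos hy _).ne'

end UnitGompertz

open UnitGompertz in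
theorem unitGompertz_mode_boundary (α β : ℝ) (hα : 0 < α) (hβ : 0 < β)
    (h : 1 < (α * β / (1 + β)) ^ (1 / β)) :
    let f : ℝ → ℝ := fun y => α * β * Real.exp (-α * (1 / y ^ β - 1)) / y ^ (1 + β)
    StrictMonoOn f (Set.Ioo (0:ℝ) 1) ∧ IsLUB (f '' Set.Ioo (0:ℝ) 1) (f 1) := by
  show StrictMonoOn (pdf α β) _ ∧ IsLUB (pdf α β '' _) (pdf α β 1)
  have hαβ : 1 + β < α * β := by
    have hratio_pos : 0 < α * β / (1 + β) := by positivity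
    rcases (one_lt_rpow_iff hratio_pos.le).mp h with ⟨hratio, -⟩ | ⟨-, -, hneg⟩
    · exact (one_lt_div (by positivity)).mp hratio
    · exact absurd hneg (not_lt.mpr (by positivity))
  have hmono := strictMonoOn_pdf hβ hαβ
  refine ⟨hmono.mono Ioo_subset_Ioc_self, ?_⟩
  exact IsLUB.isLUB_of_tendsto (hmono.monotoneOn.mono Ioo_subset_Ioc_self)
    (isLUB_Ioo zero_lt_one) (nonempty_Ioo.mpr zero_lt_one)
    (continuousAt_pdf α β zero_lt_one).continuousWithinAt.tendsto
end
end

section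
/- For 0 < t < 1 and n < β, the conditional moment E(Xⁿ | X > t) of a unit-Gompertz random variable equals e^α α^(n/β) [Γ(1 - n/β, α) - Γ(1 - n/β, α/t^β)] / (1 - exp(-α(1/t^β - 1))). -/
open MeasureTheory Real

noncomputable def incGamma (s x : ℝ) : ℝ := ∫ u in Set.Ioi x, u ^ (s - 1) * Real.exp (-u)

lemma incGamma_sub (s a b : ℝ) (hs : 0 < s) (ha : 0 < a) (hab : a ≤ b) :
    incGamma s a - incGamma s b = ∫ u in a..b, u ^ (s - 1) * Real.exp (-u) := by
  have hint : IntegrableOn (fun u : ℝ => u ^ (s - 1) * Real.exp (-u)) (Set.Ioi 0) := by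
    refine (Real.GammaIntegral_convergent hs).congr_fun (fun x _ => mul_comm _ _)
      measurableSet_Ioi
  have h1 : IntegrableOn (fun u : ℝ => u ^ (s - 1) * Real.exp (-u)) (Set.Ioc a b) :=
    hint.mono_set (fun x hx => ha.trans hx.1)
  have h2 : IntegrableOn (fun u : ℝ => u ^ (s - 1) * Real.exp (-u)) (Set.Ioi b) :=
    hint.mono_set (Set.Ioi_subset_Ioi (ha.le.trans hab))
  have hU : Set.Ioc a b ∪ Set.Ioi b = Set.Ioi a := Set.Ioc_union_Ioi_eq_Ioi hab
  rw [intervalIntegral.integral_of_le hab]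
  unfold incGamma
  rw [← hU, setIntegral_union Set.Ioc_disjoint_Ioi_same measurableSet_Ioi h1 h2]
  ring

theorem unitGompertz_conditional_moment (α β n t : ℝ) (hα : 0 < α) (hβ : 0 < β)
    (hn : n < β) (ht : t ∈ Set.Ioo (0:ℝ) 1) :
    (∫ x in t..1, x ^ n * (α * β * Real.exp (-α * (1 / x ^ β - 1)) / x ^ (1 + β))) /
        (1 - Real.exp (-α * (1 / t ^ β - 1)))
      = Real.exp α * α ^ (n / β) *
          (incGamma (1 - n / β) α - incGamma (1 - n / β) (α / t ^ β)) /
        (1 - Real.exp (-α * (1 / t ^ β - 1))) := by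
  obtain ⟨ht0, ht1⟩ := ht
  have hs : 0 < 1 - n / β := by
    have : n / β < 1 := (div_lt_one hβ).2 hn
    linarith
  have htβ : (0:ℝ) < t ^ β := Real.rpow_pos_of_pos ht0 β
  have htβ1 : t ^ β ≤ 1 := Real.rpow_le_one ht0.le ht1.le hβ.le
  have hab : α ≤ α / t ^ β := by
    rw [le_div_iff₀ htβ]; nlinarith
  congr 1
  rw [incGamma_sub _ _ _ hs hα hab]
  set f : ℝ → ℝ := fun x => α * x ^ (-β) with hf
  set f' : ℝ → ℝ := fun x => α * (-β * x ^ (-β - 1)) with hf'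
  set g : ℝ → ℝ := fun u => Real.exp α * α ^ (n / β) * (u ^ (1 - n / β - 1) * Real.exp (-u))
    with hg
  have ht1' : t ≤ 1 := ht1.le
  have hpos : ∀ x ∈ Set.uIcc t 1, (0:ℝ) < x := by
    intro x hx
    rw [Set.uIcc_of_le ht1'] at hx
    exact lt_of_lt_of_le ht0 hx.1
  have hderiv : ∀ x ∈ Set.uIcc t 1, HasDerivAt f (f' x) x := by
    intro x hx
    have hx0 : x ≠ 0 := (hpos x hx).ne'
    have := (Real.hasDerivAt_rpow_const (p := -β) (Or.inl hx0)).const_mul α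
    simpa [hf, hf', mul_comm, mul_assoc] using this
  have hcf' : ContinuousOn f' (Set.uIcc t 1) := by
    intro x hx
    have hx0 : x ≠ 0 := (hpos x hx).ne'
    exact (continuousAt_const.mul (continuousAt_const.mul
      (Real.continuousAt_rpow_const x (-β - 1) (Or.inl hx0)))).continuousWithinAt
  have hcg : ContinuousOn g (f '' Set.uIcc t 1) := by
    intro u hu
    obtain ⟨x, hx, rfl⟩ := hu
    have hfx : 0 < f x := mul_pos hα (Real.rpow_pos_of_pos (hpos x hx) _)
    exact (continuousAt_const.mul ((Real.continuousAt_rpow_const _ _ (Or.inl hfx.ne')).mul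
      (Real.continuous_exp.continuousAt.comp continuous_neg.continuousAt))).continuousWithinAt
  have hsub := intervalIntegral.integral_comp_smul_deriv' hderiv hcf' hcg
  have hft : f t = α / t ^ β := by
    rw [hf]; simp [Real.rpow_neg ht0.le, div_eq_mul_inv]
  have hf1 : f 1 = α := by simp [hf]
  have hαn : (0:ℝ) < α ^ (n / β) := Real.rpow_pos_of_pos hα _
  have key : (∫ x in t..1, f' x • (g ∘ f) x)
      = ∫ x in t..1, -(x ^ n * (α * β * Real.exp (-α * (1 / x ^ β - 1)) / x ^ (1 + β))) := by
    apply intervalIntegral.integral_congr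
    intro x hx
    have hx0 : 0 < x := hpos x hx
    have hxβ : (0:ℝ) < x ^ β := Real.rpow_pos_of_pos hx0 β
    have hxβ' : (0:ℝ) < x ^ (-β) := Real.rpow_pos_of_pos hx0 _
    have hx1β : (0:ℝ) < x ^ (1 + β) := Real.rpow_pos_of_pos hx0 _
    have e1 : (α * x ^ (-β)) ^ (1 - n / β - 1) = (α ^ (n / β))⁻¹ * x ^ n := by
      rw [show (1 - n / β - 1) = -(n / β) by ring, Real.mul_rpow hα.le hxβ'.le,
        Real.rpow_neg hα.le]
      congr 1
      rw [← Real.rpow_mul hx0.le]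
      congr 1
      field_simp
    have e2 : Real.exp (-α * (1 / x ^ β - 1)) = Real.exp α * Real.exp (-(α * x ^ (-β))) := by
      rw [← Real.exp_add]
      congr 1
      rw [Real.rpow_neg hx0.le]
      field_simp
      ring
    have e3 : x ^ (-β - 1) = (x ^ (1 + β))⁻¹ := by
      rw [← Real.rpow_neg hx0.le]
      congr 1
      ring
    simp only [smul_eq_mul, Function.comp_apply, hf, hf', hg, e1, e2, e3]
    field_simp
  calc (∫ x in t..1, x ^ n * (α * β * Real.exp (-α * (1 / x ^ β - 1)) / x ^ (1 + β)))
      = -(∫ x in t..1, -(x ^ n * (α * β * Real.exp (-α * (1 / x ^ β - 1)) / x ^ (1 + β)))) := by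
        rw [intervalIntegral.integral_neg]; ring
    _ = -(∫ u in (f t)..(f 1), g u) := by rw [← key, hsub]
    _ = ∫ u in (f 1)..(f t), g u := (intervalIntegral.integral_symm _ _).symm
    _ = ∫ u in α..(α / t ^ β), g u := by rw [hft, hf1]
    _ = Real.exp α * α ^ (n / β) *
        ∫ u in α..(α / t ^ β), u ^ (1 - n / β - 1) * Real.exp (-u) := by
        rw [← intervalIntegral.integral_const_mul]
end

section
/- For γ > 0, ∫₀¹ f(x)^γ dx = (αβ e^α)^γ · (1/β) · (αγ)^{(1 - γ(1+β))/β} · Γ(γ + (γ-1)/β, αγ), provided γ + (γ-1)/β > 0, where Γ(s,x) denotes the upper incomplete gamma function. -/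
open MeasureTheory Real

lemma key (α β γ x : ℝ) (hα : 0 < α) (hβ : 0 < β) (hγ : 0 < γ) (hx : 0 < x) :
    (α * β * Real.exp (-α * (1 / x ^ β - 1)) / x ^ (1 + β)) ^ γ
      = (α * β * Real.exp α) ^ γ * (1 / β) * (α * γ) ^ ((1 - γ * (1 + β)) / β) *
        (|α * γ * (-β * x ^ (-β - 1))| *
          ((α * γ * x ^ (-β)) ^ ((γ + (γ - 1) / β) - 1) * Real.exp (-(α * γ * x ^ (-β))))) := by
  have hαγ : 0 < α * γ := mul_pos hα hγ
  have hxb : 0 < x ^ (-β) := rpow_pos_of_pos hx _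
  have hxb1 : 0 < x ^ (-β - 1) := rpow_pos_of_pos hx _
  have habs : |α * γ * (-β * x ^ (-β - 1))| = α * γ * β * x ^ (-β - 1) := by
    rw [show α * γ * (-β * x ^ (-β - 1)) = -(α * γ * β * x ^ (-β - 1)) by ring, abs_neg,
      abs_of_pos (by positivity)]
  rw [habs]
  have hL : (α * β * Real.exp (-α * (1 / x ^ β - 1)) / x ^ (1 + β)) ^ γ
      = α ^ γ * β ^ γ * Real.exp ((α - α * x ^ (-β)) * γ) * x ^ (-((1 + β) * γ)) := by
    rw [div_rpow (by positivity) (by positivity), mul_rpow (by positivity) (exp_nonneg _),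
      mul_rpow hα.le hβ.le, ← Real.exp_mul, ← Real.rpow_mul hx.le,
      div_eq_mul_inv, ← rpow_neg hx.le]
    congr 2
    rw [one_div, ← rpow_neg hx.le]
    ring
  rw [hL]
  rw [mul_rpow (by positivity) (exp_nonneg _), mul_rpow hα.le hβ.le, ← Real.exp_mul,
    mul_rpow hαγ.le hxb.le, ← Real.rpow_mul hx.le]
  have e1 : (1 - γ * (1 + β)) / β + 1 + (γ + (γ - 1) / β - 1) = 0 := by
    field_simp
    ring
  have e2 : (-β - 1) + (-β * (γ + (γ - 1) / β - 1)) = -((1 + β) * γ) := by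
    field_simp
    ring
  symm
  calc α ^ γ * β ^ γ * Real.exp (α * γ) * (1 / β) * (α * γ) ^ ((1 - γ * (1 + β)) / β) *
        (α * γ * β * x ^ (-β - 1) *
          ((α * γ) ^ (γ + (γ - 1) / β - 1) * x ^ (-β * (γ + (γ - 1) / β - 1)) *
            Real.exp (-(α * γ * x ^ (-β)))))
      = (α ^ γ * β ^ γ) * (β * (1 / β)) *
        (Real.exp (α * γ) * Real.exp (-(α * γ * x ^ (-β)))) *
        ((α * γ) ^ ((1 - γ * (1 + β)) / β) * (α * γ) ^ (1 : ℝ) *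
          (α * γ) ^ (γ + (γ - 1) / β - 1)) *
        (x ^ (-β - 1) * x ^ (-β * (γ + (γ - 1) / β - 1))) := by
        rw [rpow_one]; ring
    _ = α ^ γ * β ^ γ * Real.exp ((α - α * x ^ (-β)) * γ) * x ^ (-((1 + β) * γ)) := by
        rw [← Real.exp_add, ← Real.rpow_add hαγ, ← Real.rpow_add hαγ, ← Real.rpow_add hx,
          mul_one_div_cancel hβ.ne', e1, e2, rpow_zero,
          show α * γ + -(α * γ * x ^ (-β)) = (α - α * x ^ (-β)) * γ by ring]
        ring

theorem unitGompertz_renyi_integral (α β γ : ℝ) (hα : 0 < α) (hβ : 0 < β)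
    (hγ : 0 < γ) (hs : 0 < γ + (γ - 1) / β) :
    ∫ x in (0:ℝ)..1, (α * β * Real.exp (-α * (1 / x ^ β - 1)) / x ^ (1 + β)) ^ γ
      = (α * β * Real.exp α) ^ γ * (1 / β) * (α * γ) ^ ((1 - γ * (1 + β)) / β) *
          incGamma (γ + (γ - 1) / β) (α * γ) := by
  have hαγ : 0 < α * γ := mul_pos hα hγ
  set f : ℝ → ℝ := fun x => α * γ * x ^ (-β) with hf
  have hderiv : ∀ x ∈ Set.Ioo (0:ℝ) 1,
      HasDerivWithinAt f (α * γ * (-β * x ^ (-β - 1))) (Set.Ioo 0 1) x := by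
    intro x hx
    exact ((Real.hasDerivAt_rpow_const (p := -β) (Or.inl hx.1.ne')).const_mul
      (α * γ)).hasDerivWithinAt
  have hinj : Set.InjOn f (Set.Ioo 0 1) := by
    intro x hx y hy hxy
    have h2 : x ^ (-β) = y ^ (-β) := mul_left_cancel₀ hαγ.ne' hxy
    exact Real.rpow_left_injOn (neg_ne_zero.2 hβ.ne') hx.1.le hy.1.le h2
  have himg : f '' Set.Ioo 0 1 = Set.Ioi (α * γ) := by
    ext u
    simp only [Set.mem_image, Set.mem_Ioo, Set.mem_Ioi, hf]
    constructor
    · rintro ⟨x, ⟨hx0, hx1⟩, rfl⟩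
      have h1 : 1 < x ^ (-β) := by
        rw [Real.one_lt_rpow_iff_of_pos hx0]
        exact Or.inr ⟨hx1, neg_neg_of_pos hβ⟩
      nlinarith
    · intro hu
      have hu0 : 0 < u := hαγ.trans hu
      have hd : 0 < α * γ / u := by positivity
      refine ⟨(α * γ / u) ^ (1/β), ⟨rpow_pos_of_pos hd _,
        Real.rpow_lt_one hd.le ((div_lt_one hu0).2 hu) (by positivity)⟩, ?_⟩
      rw [← Real.rpow_mul hd.le, show (1/β) * (-β) = (-1:ℝ) by field_simp,
        Real.rpow_neg_one]
      field_simp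
  have hchg := integral_image_eq_integral_abs_deriv_smul measurableSet_Ioo hderiv hinj
    (fun u => u ^ ((γ + (γ - 1) / β) - 1) * Real.exp (-u))
  rw [himg] at hchg
  rw [intervalIntegral.integral_of_le zero_le_one, MeasureTheory.integral_Ioc_eq_integral_Ioo]
  calc ∫ x in Set.Ioo (0:ℝ) 1, (α * β * Real.exp (-α * (1 / x ^ β - 1)) / x ^ (1 + β)) ^ γ
      = ∫ x in Set.Ioo (0:ℝ) 1,
          (α * β * Real.exp α) ^ γ * (1 / β) * (α * γ) ^ ((1 - γ * (1 + β)) / β) *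
            (|α * γ * (-β * x ^ (-β - 1))| *
              ((α * γ * x ^ (-β)) ^ ((γ + (γ - 1) / β) - 1) * Real.exp (-(α * γ * x ^ (-β))))) := by
        refine setIntegral_congr_fun measurableSet_Ioo fun x hx => ?_
        exact key α β γ x hα hβ hγ hx.1
    _ = (α * β * Real.exp α) ^ γ * (1 / β) * (α * γ) ^ ((1 - γ * (1 + β)) / β) *
          ∫ x in Set.Ioo (0:ℝ) 1, |α * γ * (-β * x ^ (-β - 1))| *
            ((α * γ * x ^ (-β)) ^ ((γ + (γ - 1) / β) - 1) * Real.exp (-(α * γ * x ^ (-β)))) := by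
        rw [MeasureTheory.integral_const_mul]
    _ = (α * β * Real.exp α) ^ γ * (1 / β) * (α * γ) ^ ((1 - γ * (1 + β)) / β) *
          incGamma (γ + (γ - 1) / β) (α * γ) := by
        rw [incGamma, hchg]
        simp only [smul_eq_mul, hf]
end

section
/- For 0 < q < 1 and β > 1, the incomplete first moment ∫₀^q x f(x) dx equals α^(1/β) e^α Γ(1 - 1/β, α/q^β), where Γ(s,x) is the upper incomplete gamma function. -/
open MeasureTheory Real

theorem unitGompertz_incomplete_first_moment (α β q : ℝ) (hα : 0 < α) (hβ : 1 < β)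
    (hq : q ∈ Set.Ioo (0:ℝ) 1) :
    ∫ x in (0:ℝ)..q, x * (α * β * Real.exp (-α * (1 / x ^ β - 1)) / x ^ (1 + β))
      = α ^ (1 / β) * Real.exp α * incGamma (1 - 1 / β) (α / q ^ β) := by
  obtain ⟨hq0, hq1⟩ := hq
  have hβ0 : (0:ℝ) < β := by linarith
  have hβne : β ≠ 0 := ne_of_gt hβ0
  set c : ℝ := α / q ^ β with hc
  set φ : ℝ → ℝ := fun x => α * x ^ (-β) with hφ
  set φ' : ℝ → ℝ := fun x => α * (-β * x ^ (-β - 1)) with hφ'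
  have hderiv : ∀ x ∈ Set.Ioo (0:ℝ) q, HasDerivWithinAt φ (φ' x) (Set.Ioo 0 q) x := by
    intro x hx
    exact ((Real.hasDerivAt_rpow_const (p := -β)
      (Or.inl (ne_of_gt hx.1))).const_mul α).hasDerivWithinAt
  have hanti : StrictAntiOn φ (Set.Ioo (0:ℝ) q) := by
    intro x hx y hy hxy
    have := Real.rpow_lt_rpow_of_neg hx.1 hxy (neg_lt_zero.mpr hβ0)
    exact mul_lt_mul_of_pos_left this hα
  have hinj : Set.InjOn φ (Set.Ioo (0:ℝ) q) := hanti.injOn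
  have hcq : c = α * q ^ (-β) := by
    rw [hc, Real.rpow_neg hq0.le]; ring
  have himg : φ '' Set.Ioo (0:ℝ) q = Set.Ioi c := by
    ext y
    constructor
    · rintro ⟨x, hx, rfl⟩
      have : q ^ (-β) < x ^ (-β) :=
        Real.rpow_lt_rpow_of_neg hx.1 hx.2 (neg_lt_zero.mpr hβ0)
      have := mul_lt_mul_of_pos_left this hα
      simpa [hcq, hφ] using this
    · intro hy
      have hc0 : 0 < c := by
        rw [hc]; positivity
      have hy0 : 0 < y := lt_trans hc0 hy
      refine ⟨(α / y) ^ (1 / β), ⟨by positivity, ?_⟩, ?_⟩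
      · have h1 : α / y < q ^ β := by
          rw [div_lt_iff₀ hy0]
          have h2 : c < y := hy
          rw [hc, div_lt_iff₀ (by positivity : (0:ℝ) < q ^ β)] at h2
          linarith [h2]
        calc (α / y) ^ (1 / β) < (q ^ β) ^ (1/β) :=
              Real.rpow_lt_rpow (by positivity) h1 (by positivity)
          _ = q := by
              rw [← Real.rpow_mul hq0.le, mul_one_div, div_self hβne, Real.rpow_one]
      · show α * ((α / y) ^ (1 / β)) ^ (-β) = y
        rw [← Real.rpow_mul (by positivity)]
        have he : (1/β) * (-β) = -1 := by field_simp
        rw [he, Real.rpow_neg_one]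
        field_simp
  -- rewrite incGamma via the change of variables
  have hchange : incGamma (1 - 1 / β) c
      = ∫ x in Set.Ioo (0:ℝ) q, |φ' x| • ((φ x) ^ (1 - 1/β - 1) * Real.exp (-(φ x))) := by
    rw [incGamma, ← himg]
    exact integral_image_eq_integral_abs_deriv_smul measurableSet_Ioo hderiv hinj _
  rw [hchange, intervalIntegral.integral_of_le hq0.le,
    MeasureTheory.integral_Ioc_eq_integral_Ioo, ← MeasureTheory.integral_const_mul]
  apply MeasureTheory.setIntegral_congr_fun measurableSet_Ioo
  intro x hx
  have hx0 : 0 < x := hx.1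
  have hxne : x ≠ 0 := ne_of_gt hx0
  simp only [smul_eq_mul, hφ, hφ']
  have hxb : (0:ℝ) < x ^ (-β) := Real.rpow_pos_of_pos hx0 _
  have hxb1 : (0:ℝ) < x ^ (1 + β) := Real.rpow_pos_of_pos hx0 _
  have hxq : (0:ℝ) < x ^ (-β - 1) := Real.rpow_pos_of_pos hx0 _
  have h1 : |α * (-β * x ^ (-β - 1))| = α * (β * x ^ (-β - 1)) := by
    rw [abs_of_nonpos (by nlinarith [mul_pos hβ0 hxq])]
    ring
  have h2 : (α * x ^ (-β)) ^ (1 - 1/β - 1) = α ^ (-(1/β)) * x := by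
    have he0 : (1:ℝ) - 1/β - 1 = -(1/β) := by ring
    rw [he0, Real.mul_rpow hα.le hxb.le, ← Real.rpow_mul hx0.le]
    have he : -β * -(1/β) = 1 := by field_simp
    rw [he, Real.rpow_one]
  have h3 : Real.exp (-α * (1 / x ^ β - 1)) = Real.exp (-(α * x ^ (-β))) * Real.exp α := by
    rw [← Real.exp_add, Real.rpow_neg hx0.le]
    ring_nf
  have h4 : x ^ (-β - 1) * x = x ^ (-β) := by
    rw [show -β - 1 = -β + (-1) by ring, Real.rpow_add hx0, Real.rpow_neg_one]
    field_simp
  have hPR : x ^ (-β) * x ^ (1 + β) = x := by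
    rw [← Real.rpow_add hx0]
    norm_num
  have h6 : α ^ (1/β) * α ^ (-(1/β)) = 1 := by
    rw [← Real.rpow_add hα, add_neg_cancel, Real.rpow_zero]
  rw [h1, h2, h3, ← mul_div_assoc, div_eq_iff (ne_of_gt hxb1)]
  linear_combination (-(Real.exp α * α * β * x ^ (-β - 1) * x *
      Real.exp (-(α * x ^ (-β))) * x ^ (1 + β))) * h6
    + (-(Real.exp α * α * β * Real.exp (-(α * x ^ (-β))) * x ^ (1 + β))) * h4
    + (-(Real.exp α * α * β * Real.exp (-(α * x ^ (-β))))) * hPR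
end

section
/- For k < β, the k-th moment of the j-th order statistic X_(j) from a sample of size n from the unit-Gompertz distribution equals (α e^(αj) n!)/((j-1)!(n-j)!) · Σ_{r=0}^{n-j} C(n-j, r)(-1)^r e^(rα) (α(j+r))^(k/β - 1) Γ(1 - k/β, α(j+r)). -/
/-!
Expanding `(1 - F)^(n-j)` binomially writes the integrand as a finite sum of terms
`x^k F(x)^(j-1+r) f(x)`, and `F^m f` is again a unit-Gompertz density, with parameter
`α (m + 1)`, up to the factor `1 / (m + 1)`. For a single such density the substitution
`u = a x^(-β)` maps `(0, 1)` onto `(a, ∞)` and turns `∫ x^k` into `e^a a^(k/β - 1) Γ(1 - k/β, a)`;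
the condition `k < β` makes the resulting incomplete gamma integral converge.
-/

open MeasureTheory Real

open Set Finset Nat

theorem pow_mul_one_sub_pow_eq_sum {R : Type*} [CommRing R] (y : R) (m N : ℕ) :
    y ^ m * (1 - y) ^ N = ∑ r ∈ range (N + 1), (N.choose r : R) * (-1) ^ r * y ^ (m + r) := by
  rw [← neg_add_eq_sub, add_pow, mul_sum]
  refine sum_congr rfl fun r _ => ?_
  rw [neg_pow, pow_add]
  ring

/-- The unit-Gompertz density with parameter `a`, divided by `a`. -/
noncomputable def unitGompertzKernel (a β x : ℝ) : ℝ :=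
  β * exp (-a * (1 / x ^ β - 1)) / x ^ (1 + β)

section Substitution

variable {a β : ℝ}

theorem image_mul_rpow_neg_Ioo (ha : 0 < a) (hβ : 0 < β) :
    (fun x : ℝ => a * x ^ (-β)) '' Ioo 0 1 = Ioi a := by
  ext u
  constructor
  · rintro ⟨x, ⟨hx0, hx1⟩, rfl⟩
    exact lt_mul_of_one_lt_right ha
      (one_lt_rpow_of_pos_of_lt_one_of_neg hx0 hx1 (neg_neg_of_pos hβ))
  · intro hu
    have hua : 1 < u / a := (one_lt_div ha).mpr hu
    refine ⟨(u / a) ^ (-β⁻¹), ⟨by positivity, ?_⟩, ?_⟩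
    · exact rpow_lt_one_of_one_lt_of_neg hua (by simpa using hβ)
    · show a * ((u / a) ^ (-β⁻¹)) ^ (-β) = u
      rw [← rpow_mul (by positivity), neg_mul_neg, inv_mul_cancel₀ hβ.ne', rpow_one,
        mul_div_cancel₀ _ ha.ne']

theorem injOn_mul_rpow_neg_Ioo (ha : 0 < a) (hβ : 0 < β) :
    InjOn (fun x : ℝ => a * x ^ (-β)) (Ioo 0 1) :=
  fun _ hx _ hy h => (strictAntiOn_rpow_Ioi_of_exponent_neg (neg_neg_of_pos hβ)).injOn hx.1 hy.1
    (mul_left_cancel₀ ha.ne' h)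

theorem hasDerivWithinAt_mul_rpow_neg_Ioo :
    ∀ x ∈ Ioo (0 : ℝ) 1,
      HasDerivWithinAt (fun x : ℝ => a * x ^ (-β)) (a * (-β * x ^ (-β - 1))) (Ioo 0 1) x :=
  fun _ hx => ((hasDerivAt_rpow_const (Or.inl hx.1.ne')).const_mul a).hasDerivWithinAt

theorem rpow_mul_unitGompertzKernel_eq (k : ℝ) (ha : 0 < a) (hβ : 0 < β) {x : ℝ} (hx : 0 < x) :
    x ^ k * unitGompertzKernel a β x = exp a * a ^ (k / β - 1) *
      (|a * (-β * x ^ (-β - 1))| * ((a * x ^ (-β)) ^ (1 - k / β - 1) * exp (-(a * x ^ (-β))))) := by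
  have hβ0 : β ≠ 0 := hβ.ne'
  rw [abs_of_neg (mul_neg_of_pos_of_neg ha
    (mul_neg_of_neg_of_pos (neg_neg_of_pos hβ) (rpow_pos_of_pos hx _))), mul_rpow ha.le (by positivity),
    ← rpow_mul hx.le, unitGompertzKernel, one_div, ← rpow_neg hx.le, mul_sub, mul_one, exp_sub]
  rw [show 1 - k / β - 1 = -(k / β) by ring, show -β * -(k / β) = k by field_simp,
    rpow_sub_one ha.ne', rpow_neg ha.le, rpow_sub_one hx.ne', rpow_neg hx.le, rpow_add hx, rpow_one]
  field_simp
  rw [← exp_add, neg_add_cancel, exp_zero]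

theorem integrableOn_rpow_mul_unitGompertzKernel {k : ℝ} (ha : 0 < a) (hβ : 0 < β) (hk : k < β) :
    IntegrableOn (fun x => x ^ k * unitGompertzKernel a β x) (Ioo 0 1) := by
  have hs : 0 < 1 - k / β := sub_pos.mpr ((div_lt_one hβ).mpr hk)
  have hΓ : IntegrableOn (fun u => u ^ (1 - k / β - 1) * exp (-u)) (Ioi a) :=
    ((GammaIntegral_convergent hs).mono_set (Ioi_subset_Ioi ha.le)).congr_fun
      (fun _ _ => mul_comm _ _) measurableSet_Ioi
  rw [← image_mul_rpow_neg_Ioo ha hβ, integrableOn_image_iff_integrableOn_abs_deriv_smul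
    measurableSet_Ioo hasDerivWithinAt_mul_rpow_neg_Ioo (injOn_mul_rpow_neg_Ioo ha hβ)] at hΓ
  exact IntegrableOn.congr_fun (hΓ.const_mul (exp a * a ^ (k / β - 1)))
    (fun x hx => (rpow_mul_unitGompertzKernel_eq k ha hβ hx.1).symm) measurableSet_Ioo

theorem integral_rpow_mul_unitGompertzKernel (k : ℝ) (ha : 0 < a) (hβ : 0 < β) :
    ∫ x in Ioo 0 1, x ^ k * unitGompertzKernel a β x
      = exp a * a ^ (k / β - 1) * incGamma (1 - k / β) a := by
  have hsubst := integral_image_eq_integral_abs_deriv_smul measurableSet_Ioo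
    hasDerivWithinAt_mul_rpow_neg_Ioo (injOn_mul_rpow_neg_Ioo ha hβ)
    (fun u => u ^ (1 - k / β - 1) * exp (-u))
  rw [image_mul_rpow_neg_Ioo ha hβ] at hsubst
  rw [setIntegral_congr_fun measurableSet_Ioo
    (fun x hx => rpow_mul_unitGompertzKernel_eq k ha hβ hx.1), integral_const_mul, incGamma, hsubst]
  rfl

end Substitution

theorem unitGompertz_density_mul_cdf_pow (α β x : ℝ) (m : ℕ) :
    α * β * exp (-α * (1 / x ^ β - 1)) / x ^ (1 + β) * exp (-α * (1 / x ^ β - 1)) ^ m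
      = α * unitGompertzKernel (α * (m + 1)) β x := by
  have hexp : exp (-(α * (m + 1)) * (1 / x ^ β - 1))
      = exp (-α * (1 / x ^ β - 1)) * exp (-α * (1 / x ^ β - 1)) ^ m := by
    rw [← exp_nat_mul, ← exp_add]
    ring_nf
  rw [unitGompertzKernel, hexp]
  ring

theorem unitGompertz_order_statistic_moment_general (α β k : ℝ) (hα : 0 < α) (hβ : 0 < β)
    (hk : k < β) (n j : ℕ) (hj : 1 ≤ j) :
    let f : ℝ → ℝ := fun x => α * β * Real.exp (-α * (1 / x ^ β - 1)) / x ^ (1 + β)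
    let F : ℝ → ℝ := fun x => Real.exp (-α * (1 / x ^ β - 1))
    ∫ x in (0:ℝ)..1,
        x ^ k * ((Nat.factorial n : ℝ) / (Nat.factorial (j - 1) * Nat.factorial (n - j)) * f x * F x ^ (j - 1) * (1 - F x) ^ (n - j))
      = α * Real.exp (α * j) * (Nat.factorial n : ℝ) / (Nat.factorial (j - 1) * Nat.factorial (n - j)) *
          ∑ r ∈ Finset.range (n - j + 1),
            ((n - j).choose r : ℝ) * (-1) ^ r * Real.exp (r * α) *
              (α * (j + r)) ^ (k / β - 1) * incGamma (1 - k / β) (α * (j + r)) := by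
  intro f F
  set K : ℝ := (n ! : ℝ) / ((j - 1)! * (n - j)!)
  set N := n - j
  have hrate : ∀ r : ℕ, 0 < α * (j + r) := fun r => by
    have : (1 : ℝ) ≤ j := by exact_mod_cast hj
    positivity
  have hexpand : ∀ x, x ^ k * (K * f x * F x ^ (j - 1) * (1 - F x) ^ N)
      = ∑ r ∈ range (N + 1),
          K * α * N.choose r * (-1) ^ r * (x ^ k * unitGompertzKernel (α * (j + r)) β x) := by
    intro x
    rw [mul_assoc (K * f x), pow_mul_one_sub_pow_eq_sum, mul_sum, mul_sum]
    refine sum_congr rfl fun r _ => ?_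
    have hdens : f x * F x ^ (j - 1 + r) = α * unitGompertzKernel (α * (j + r)) β x := by
      have hcast : ((j - 1 + r : ℕ) : ℝ) + 1 = j + r := by
        rw [Nat.cast_add, Nat.cast_sub hj]
        ring
      rw [← hcast]
      exact unitGompertz_density_mul_cdf_pow α β x _
    linear_combination (K * N.choose r * (-1) ^ r * x ^ k) * hdens
  rw [intervalIntegral.integral_of_le zero_le_one, integral_Ioc_eq_integral_Ioo, funext hexpand,
    integral_finsetSum _ fun r _ =>
      (integrableOn_rpow_mul_unitGompertzKernel (hrate r) hβ hk).const_mul _, mul_sum]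
  refine sum_congr rfl fun r _ => ?_
  have hexp : exp (α * (j + r)) = exp (α * j) * exp (r * α) := by
    rw [← exp_add]
    ring_nf
  rw [integral_const_mul, integral_rpow_mul_unitGompertzKernel k (hrate r) hβ, hexp]
  ring

theorem unitGompertz_order_statistic_moment (α β k : ℝ) (hα : 0 < α) (hβ : 0 < β)
    (hk : k < β) (n j : ℕ) (hj : 1 ≤ j) (hjn : j ≤ n) :
    let f : ℝ → ℝ := fun x => α * β * Real.exp (-α * (1 / x ^ β - 1)) / x ^ (1 + β)
    let F : ℝ → ℝ := fun x => Real.exp (-α * (1 / x ^ β - 1))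
    ∫ x in (0:ℝ)..1,
        x ^ k * ((Nat.factorial n : ℝ) / (Nat.factorial (j - 1) * Nat.factorial (n - j)) * f x * F x ^ (j - 1) * (1 - F x) ^ (n - j))
      = α * Real.exp (α * j) * (Nat.factorial n : ℝ) / (Nat.factorial (j - 1) * Nat.factorial (n - j)) *
          ∑ r ∈ Finset.range (n - j + 1),
            ((n - j).choose r : ℝ) * (-1) ^ r * Real.exp (r * α) *
              (α * (j + r)) ^ (k / β - 1) * incGamma (1 - k / β) (α * (j + r)) :=
  unitGompertz_order_statistic_moment_general α β k hα hβ hk n j hj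
end

section
/- The expected inactivity time of the unit-Gompertz distribution satisfies I(x) = (1/F(x)) ∫₀ˣ F(y) dy = (e^(α/x^β) α^(1/β)/β) Γ(-1/β, α/x^β) for x ∈ (0,1), where Γ(s,x) is the upper incomplete gamma function. -/
open MeasureTheory Real

theorem unitGompertz_expected_inactivity_time (α β : ℝ) (hα : 0 < α) (hβ : 0 < β) :
    ∀ x ∈ Set.Ioo (0:ℝ) 1,
      (1 / Real.exp (-α * (1 / x ^ β - 1))) *
          ∫ y in (0:ℝ)..x, Real.exp (-α * (1 / y ^ β - 1))
        = Real.exp (α / x ^ β) * α ^ (1 / β) / β * incGamma (-1 / β) (α / x ^ β) := by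
  rintro x ⟨hx0, hx1⟩
  have hxb : 0 < x ^ β := Real.rpow_pos_of_pos hx0 β
  set c : ℝ := α / x ^ β with hc
  have hc0 : 0 < c := div_pos hα hxb
  set f : ℝ → ℝ := fun y => α * y ^ (-β) with hf
  set f' : ℝ → ℝ := fun y => α * (-β * y ^ (-β - 1)) with hf'
  have hderiv : ∀ y ∈ Set.Ioo (0:ℝ) x, HasDerivWithinAt f (f' y) (Set.Ioo (0:ℝ) x) y := by
    intro y hy
    exact ((Real.hasDerivAt_rpow_const (p := -β) (Or.inl (ne_of_gt hy.1))).const_mul α).hasDerivWithinAt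
  have hinj : Set.InjOn f (Set.Ioo (0:ℝ) x) := by
    intro a ha b hb hab
    have h1 : a ^ (-β) = b ^ (-β) := by
      simp only [hf] at hab
      exact mul_left_cancel₀ (ne_of_gt hα) hab
    exact Real.rpow_left_injOn (neg_ne_zero.mpr (ne_of_gt hβ)) (le_of_lt ha.1) (le_of_lt hb.1) h1
  have himg : f '' Set.Ioo (0:ℝ) x = Set.Ioi c := by
    ext u
    constructor
    · rintro ⟨y, hy, rfl⟩
      have hxy : x ^ (-β) < y ^ (-β) := by
        rw [Real.rpow_neg hx0.le, Real.rpow_neg hy.1.le]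
        exact inv_strictAnti₀ (Real.rpow_pos_of_pos hy.1 β)
          (Real.rpow_lt_rpow hy.1.le hy.2 hβ)
      simp only [Set.mem_Ioi, hc, hf]
      rw [div_eq_mul_inv, ← Real.rpow_neg hx0.le]
      exact mul_lt_mul_of_pos_left hxy hα
    · intro hu
      have hu0 : 0 < u := hc0.trans hu
      refine ⟨α ^ (1/β) * u ^ (-(1/β)), ⟨by positivity, ?_⟩, ?_⟩
      · have h1 : α / u < x ^ β := by
          rw [div_lt_iff₀ hu0]
          have h := (div_lt_iff₀ hxb).mp hu
          nlinarith [mul_comm u (x ^ β)]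
        have h2 : (α / u) ^ (1/β) < (x ^ β) ^ (1/β) :=
          Real.rpow_lt_rpow (by positivity) h1 (by positivity)
        rw [← Real.rpow_mul hx0.le, mul_one_div, div_self (ne_of_gt hβ), Real.rpow_one] at h2
        calc α ^ (1/β) * u ^ (-(1/β)) = (α / u) ^ (1/β) := by
              rw [Real.div_rpow hα.le hu0.le, Real.rpow_neg hu0.le]
              exact (div_eq_mul_inv _ _).symm
        _ < x := h2
      · simp only [hf]
        rw [Real.mul_rpow (by positivity) (by positivity), ← Real.rpow_mul hα.le,
          ← Real.rpow_mul (by positivity : (0:ℝ) ≤ u)]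
        rw [show (1/β) * (-β) = -1 by field_simp, show (-(1/β)) * (-β) = 1 by field_simp]
        rw [Real.rpow_one, Real.rpow_neg_one]
        field_simp
  have key : incGamma (-1/β) c
      = β * α ^ (-(1/β)) * ∫ y in Set.Ioo (0:ℝ) x, Real.exp (-(α / y ^ β)) := by
    have h := MeasureTheory.integral_image_eq_integral_abs_deriv_smul measurableSet_Ioo hderiv hinj
      (fun u => u ^ (-1/β - 1) * Real.exp (-u))
    rw [himg] at h
    rw [incGamma, h, ← MeasureTheory.integral_const_mul]
    apply MeasureTheory.setIntegral_congr_fun measurableSet_Ioo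
    intro y hy
    have hy0 := hy.1
    have hyb : 0 < y ^ β := Real.rpow_pos_of_pos hy0 β
    simp only [smul_eq_mul, hf, hf']
    have habs : |α * (-β * y ^ (-β - 1))| = α * β * y ^ (-β - 1) := by
      rw [abs_of_nonpos (by nlinarith [mul_pos (mul_pos hα hβ) (Real.rpow_pos_of_pos hy0 (-β - 1))])]
      ring
    have hpow : (α * y ^ (-β)) ^ (-1/β - 1) = α ^ (-1/β - 1) * y ^ (β + 1) := by
      rw [Real.mul_rpow hα.le (by positivity), ← Real.rpow_mul hy0.le]
      congr 2
      field_simp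
      ring
    have hexp : -(α * y ^ (-β)) = -(α / y ^ β) := by
      rw [Real.rpow_neg hy0.le]
      field_simp
    rw [habs, hpow, hexp]
    have hne : 1 + (-1/β - 1) ≠ 0 := by
      rw [show 1 + (-1/β - 1) = -(1/β) by ring]
      exact neg_ne_zero.mpr (by positivity)
    have e1 : α * α ^ (-1/β - 1) = α ^ (-(1/β)) := by
      rw [← Real.rpow_one_add' hα.le hne]
      congr 1
      ring
    have e2 : y ^ (-β - 1) * y ^ (β + 1) = 1 := by
      rw [← Real.rpow_add hy0, show (-β - 1) + (β + 1) = 0 by ring, Real.rpow_zero]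
    calc α * β * y ^ (-β - 1) * (α ^ (-1/β - 1) * y ^ (β + 1) * Real.exp (-(α / y ^ β)))
        = β * (α * α ^ (-1/β - 1)) * (y ^ (-β - 1) * y ^ (β + 1)) * Real.exp (-(α / y ^ β)) := by
          ring
    _ = β * α ^ (-(1/β)) * Real.exp (-(α / y ^ β)) := by rw [e1, e2]; ring
  have hInt : (∫ y in (0:ℝ)..x, Real.exp (-α * (1 / y ^ β - 1)))
      = Real.exp α * ∫ y in Set.Ioo (0:ℝ) x, Real.exp (-(α / y ^ β)) := by
    rw [intervalIntegral.integral_of_le hx0.le, MeasureTheory.integral_Ioc_eq_integral_Ioo,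
      ← MeasureTheory.integral_const_mul]
    apply MeasureTheory.setIntegral_congr_fun measurableSet_Ioo
    intro y hy
    have hyb : (y:ℝ) ^ β ≠ 0 := ne_of_gt (Real.rpow_pos_of_pos hy.1 β)
    show Real.exp (-α * (1 / y ^ β - 1)) = Real.exp α * Real.exp (-(α / y ^ β))
    rw [← Real.exp_add]
    congr 1
    field_simp
    ring
  set I : ℝ := ∫ y in Set.Ioo (0:ℝ) x, Real.exp (-(α / y ^ β)) with hI
  rw [hInt, show (-1/β : ℝ) = -1/β by ring, key, one_div, ← Real.exp_neg]
  have hcancel : α ^ (1/β) * α ^ (-(1/β)) = 1 := by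
    rw [← Real.rpow_add hα, add_neg_cancel, Real.rpow_zero]
  have hx' : x ^ β ≠ 0 := ne_of_gt hxb
  have lhs_eq : Real.exp (-(-α * (1 / x ^ β - 1))) * (Real.exp α * I)
      = Real.exp (α / x ^ β) * I := by
    rw [← mul_assoc, ← Real.exp_add]
    congr 2
    field_simp
    ring
  have rhs_eq : Real.exp (α / x ^ β) * α ^ (1/β) / β * (β * α ^ (-(1/β)) * I)
      = Real.exp (α / x ^ β) * I := by
    rw [show Real.exp (α / x ^ β) * α ^ (1/β) / β * (β * α ^ (-(1/β)) * I)
      = (α ^ (1/β) * α ^ (-(1/β))) * (Real.exp (α / x ^ β) * I) * (β / β) by ring,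
      hcancel, div_self (ne_of_gt hβ), mul_one, one_mul]
  rw [lhs_eq, rhs_eq]
end

section
/- If X ~ UG(α₁, β) and Y ~ UG(α₂, β) are independent unit-Gompertz random variables with common scale parameter β, then P(Y < X) = α₁/(α₁ + α₂). -/
/-! Conditioning on `X`, `P(Y < X) = ∫ F₂ f₁` where `f₁` is the density of `X` and `F₂` the cdf
of `Y`. Since the cdfs are exponentials in the common variable `x ^ (-β) - 1`, the product
`F₂ f₁` equals `α₁ / (α₁ + α₂)` times the density with parameter `α₁ + α₂`, which integrates
to `1`. -/

open MeasureTheory ProbabilityTheory Real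

/-- The unit-Gompertz cdf, extended to all of ℝ. -/
noncomputable def ugCDF (α β x : ℝ) : ℝ :=
  if x ≤ 0 then 0 else if x < 1 then Real.exp (-α * (1 / x ^ β - 1)) else 1

open Set Filter Topology

theorem lintegral_Ioc_ofReal_eq_sub_of_hasDerivAt {F f : ℝ → ℝ} {a b : ℝ} (hab : a ≤ b)
    (hcont : ContinuousOn F (Icc a b)) (hderiv : ∀ x ∈ Ioo a b, HasDerivAt F (f x) x)
    (hf : ∀ x ∈ Ioo a b, 0 ≤ f x) :
    ∫⁻ x in Ioc a b, ENNReal.ofReal (f x) = ENNReal.ofReal (F b - F a) := by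
  have hint : IntegrableOn f (Ioo a b) :=
    (intervalIntegral.integrableOn_deriv_of_nonneg hcont hderiv hf).mono_set Ioo_subset_Ioc_self
  rw [setLIntegral_congr Ioo_ae_eq_Ioc.symm,
    ← ofReal_integral_eq_lintegral_ofReal hint (ae_restrict_of_forall_mem measurableSet_Ioo hf),
    ← integral_Ioc_eq_integral_Ioo, ← intervalIntegral.integral_of_le hab,
    intervalIntegral.integral_eq_sub_of_hasDerivAt_of_le hab hcont hderiv
      (intervalIntegral.intervalIntegrable_deriv_of_nonneg (by rwa [uIcc_of_le hab])
        (by simpa [hab] using hderiv) (by simpa [hab] using hf))]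

noncomputable def ugDensity (α β x : ℝ) : ℝ :=
  α * β * Real.exp (-α * (1 / x ^ β - 1)) / x ^ (β + 1)

theorem ugDensity_nonneg {α β x : ℝ} (hα : 0 ≤ α) (hβ : 0 ≤ β) (hx : 0 < x) :
    0 ≤ ugDensity α β x := by
  unfold ugDensity; positivity

@[fun_prop]
theorem measurable_ugDensity (α β : ℝ) : Measurable (ugDensity α β) := by
  unfold ugDensity; fun_prop

theorem ugDensity_mul_exp (α₁ α₂ β x : ℝ) (h : α₁ + α₂ ≠ 0) :
    ugDensity α₁ β x * Real.exp (-α₂ * (1 / x ^ β - 1)) =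
      α₁ / (α₁ + α₂) * ugDensity (α₁ + α₂) β x := by
  have hexp : Real.exp (-(α₁ + α₂) * (1 / x ^ β - 1)) =
      Real.exp (-α₁ * (1 / x ^ β - 1)) * Real.exp (-α₂ * (1 / x ^ β - 1)) := by
    rw [← Real.exp_add]; ring_nf
  rw [ugDensity, ugDensity, hexp]
  field_simp

theorem ugCDF_of_nonpos (α β : ℝ) {x : ℝ} (hx : x ≤ 0) : ugCDF α β x = 0 := if_pos hx

theorem ugCDF_of_one_le (α β : ℝ) {x : ℝ} (hx : 1 ≤ x) : ugCDF α β x = 1 := by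
  rw [ugCDF, if_neg (by linarith), if_neg hx.not_gt]

theorem ugCDF_of_mem_Ioc (α β : ℝ) {x : ℝ} (hx : x ∈ Ioc 0 1) :
    ugCDF α β x = Real.exp (-α * (1 / x ^ β - 1)) := by
  rcases hx.2.lt_or_eq with hx1 | rfl
  · rw [ugCDF, if_neg hx.1.not_ge, if_pos hx1]
  · simp [ugCDF_of_one_le]

theorem hasDerivAt_ugCDF (α β : ℝ) {x : ℝ} (hx : x ∈ Ioo 0 1) :
    HasDerivAt (ugCDF α β) (ugDensity α β x) x := by
  have hx0 := hx.1
  have hpow : HasDerivAt (fun t : ℝ => 1 / t ^ β - 1) (-(β * x ^ (β - 1)) / (x ^ β) ^ 2) x := by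
    simpa [one_div] using ((Real.hasDerivAt_rpow_const (p := β) (Or.inl hx0.ne')).inv
      (Real.rpow_pos_of_pos hx0 β).ne').sub_const 1
  have hform := (hpow.const_mul (-α)).exp
  have heq : ugCDF α β =ᶠ[𝓝 x] fun t => Real.exp (-α * (1 / t ^ β - 1)) :=
    eventually_of_mem (Ioo_mem_nhds hx.1 hx.2) fun t ht =>
      ugCDF_of_mem_Ioc α β (Ioo_subset_Ioc_self ht)
  refine (hform.congr_deriv ?_).congr_of_eventuallyEq heq
  have hpow' : x ^ (β - 1) / (x ^ β) ^ 2 = 1 / x ^ (β + 1) := by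
    rw [sq, ← Real.rpow_add hx0, div_eq_div_iff (by positivity) (by positivity),
      ← Real.rpow_add hx0, one_mul]
    ring_nf
  rw [ugDensity, neg_div, mul_div_assoc β, hpow']
  ring

theorem tendsto_ugCDF_nhdsGT_zero {α β : ℝ} (hα : 0 < α) (hβ : 0 < β) :
    Tendsto (ugCDF α β) (𝓝[>] 0) (𝓝 0) := by
  have hinv : Tendsto (fun t : ℝ => 1 / t ^ β - 1) (𝓝[>] 0) atTop := by
    refine tendsto_atTop_add_const_right _ (-1) ((tendsto_rpow_neg_nhdsGT_zero
      (neg_neg_iff_pos.mpr hβ)).congr' ?_)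
    filter_upwards [self_mem_nhdsWithin] with t ht
    rw [Real.rpow_neg (le_of_lt ht), one_div]
  have hexp := Real.tendsto_exp_atBot.comp (hinv.const_mul_atTop_of_neg (neg_neg_iff_pos.mpr hα))
  refine hexp.congr' ?_
  filter_upwards [Ioo_mem_nhdsGT one_pos] with t ht
  exact (ugCDF_of_mem_Ioc α β (Ioo_subset_Ioc_self ht)).symm

theorem continuousOn_ugCDF {α β : ℝ} (hα : 0 < α) (hβ : 0 < β) :
    ContinuousOn (ugCDF α β) (Icc 0 1) := by
  intro x hx
  rcases hx.1.eq_or_lt with rfl | hx0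
  · refine (continuousWithinAt_Ioi_iff_Ici.mp ?_).mono Icc_subset_Ici_self
    simpa [ContinuousWithinAt, ugCDF_of_nonpos] using tendsto_ugCDF_nhdsGT_zero hα hβ
  · have hform : ContinuousAt (fun t : ℝ => Real.exp (-α * (1 / t ^ β - 1))) x := by
      fun_prop (disch := positivity)
    refine hform.continuousWithinAt.congr_of_eventuallyEq ?_ (ugCDF_of_mem_Ioc α β ⟨hx0, hx.2⟩)
    filter_upwards [inter_mem_nhdsWithin (Icc 0 1) (Ioi_mem_nhds hx0)] with t ht
    exact ugCDF_of_mem_Ioc α β ⟨ht.2, ht.1.2⟩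

theorem lintegral_ugDensity_Ioc {α β x : ℝ} (hα : 0 < α) (hβ : 0 < β) (hx0 : 0 ≤ x)
    (hx1 : x ≤ 1) :
    ∫⁻ t in Ioc 0 x, ENNReal.ofReal (ugDensity α β t) = ENNReal.ofReal (ugCDF α β x) := by
  rw [lintegral_Ioc_ofReal_eq_sub_of_hasDerivAt hx0
      ((continuousOn_ugCDF hα hβ).mono (Icc_subset_Icc_right hx1))
      (fun t ht => hasDerivAt_ugCDF α β ⟨ht.1, ht.2.trans_le hx1⟩)
      (fun t ht => ugDensity_nonneg hα.le hβ.le ht.1),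
    ugCDF_of_nonpos α β le_rfl, sub_zero]

noncomputable def ugLaw (α β : ℝ) : Measure ℝ :=
  (volume.restrict (Ioc 0 1)).withDensity fun x => ENNReal.ofReal (ugDensity α β x)

instance nullSingletonClass_ugLaw (α β : ℝ) : NullSingletonClass (ugLaw α β) := by
  unfold ugLaw; infer_instance

theorem ugLaw_Iic {α β : ℝ} (hα : 0 < α) (hβ : 0 < β) (x : ℝ) :
    ugLaw α β (Iic x) = ENNReal.ofReal (ugCDF α β x) := by
  rw [ugLaw, withDensity_apply _ measurableSet_Iic, Measure.restrict_restrict measurableSet_Iic,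
    inter_comm, Ioc_inter_Iic]
  rcases le_or_gt x 0 with hx0 | hx0
  · rw [Ioc_eq_empty (by simp [hx0]), ugCDF_of_nonpos α β hx0]
    simp
  · rw [lintegral_ugDensity_Ioc hα hβ (by positivity) inf_le_left]
    rcases le_total x 1 with hx1 | hx1
    · rw [inf_eq_right.mpr hx1]
    · rw [inf_eq_left.mpr hx1, ugCDF_of_one_le α β le_rfl, ugCDF_of_one_le α β hx1]

theorem isProbabilityMeasure_ugLaw {α β : ℝ} (hα : 0 < α) (hβ : 0 < β) :
    IsProbabilityMeasure (ugLaw α β) where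
  measure_univ := by
    rw [ugLaw, withDensity_apply _ MeasurableSet.univ, Measure.restrict_univ,
      lintegral_ugDensity_Ioc hα hβ zero_le_one le_rfl, ugCDF_of_one_le α β le_rfl,
      ENNReal.ofReal_one]

theorem ugLaw_prod_setOf_snd_lt_fst {α₁ α₂ β : ℝ} (hα₁ : 0 < α₁) (hα₂ : 0 < α₂) (hβ : 0 < β) :
    (ugLaw α₁ β).prod (ugLaw α₂ β) {p | p.2 < p.1} = ENNReal.ofReal (α₁ / (α₁ + α₂)) := by
  have := isProbabilityMeasure_ugLaw hα₂ hβ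
  have hα : 0 < α₁ + α₂ := add_pos hα₁ hα₂
  rw [Measure.prod_apply (measurableSet_lt measurable_snd measurable_fst)]
  calc ∫⁻ x, ugLaw α₂ β (Prod.mk x ⁻¹' {p | p.2 < p.1}) ∂ugLaw α₁ β
      = ∫⁻ x in Ioc 0 1, ENNReal.ofReal (ugDensity α₁ β x) * ENNReal.ofReal (ugCDF α₂ β x) := by
        rw [ugLaw, lintegral_withDensity_eq_lintegral_mul_non_measurable _
          (by fun_prop) (ae_of_all _ fun _ => ENNReal.ofReal_lt_top)]
        refine lintegral_congr fun x => ?_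
        change _ * ugLaw α₂ β (Iio x) = _
        rw [measure_congr Iio_ae_eq_Iic, ugLaw_Iic hα₂ hβ]
    _ = ∫⁻ x in Ioc 0 1,
          ENNReal.ofReal (α₁ / (α₁ + α₂)) * ENNReal.ofReal (ugDensity (α₁ + α₂) β x) := by
        refine setLIntegral_congr_fun measurableSet_Ioc fun x hx => ?_
        rw [← ENNReal.ofReal_mul (ugDensity_nonneg hα₁.le hβ.le hx.1),
          ← ENNReal.ofReal_mul (by positivity),
          ugCDF_of_mem_Ioc α₂ β hx, ugDensity_mul_exp α₁ α₂ β x hα.ne']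
    _ = ENNReal.ofReal (α₁ / (α₁ + α₂)) := by
        rw [lintegral_const_mul _ (by fun_prop),
          lintegral_ugDensity_Ioc hα hβ zero_le_one le_rfl, ugCDF_of_one_le _ β le_rfl,
          ENNReal.ofReal_one, mul_one]

theorem map_eq_ugLaw {Ω : Type*} [MeasurableSpace Ω] {μ : Measure Ω} [IsProbabilityMeasure μ]
    {α β : ℝ} (hα : 0 < α) (hβ : 0 < β) {X : Ω → ℝ} (hX : Measurable X)
    (hF : ∀ x : ℝ, μ {ω | X ω ≤ x} = ENNReal.ofReal (ugCDF α β x)) :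
    μ.map X = ugLaw α β := by
  have := isProbabilityMeasure_ugLaw hα hβ
  have := Measure.isProbabilityMeasure_map (μ := μ) hX.aemeasurable
  refine Measure.ext_of_Iic _ _ fun x => ?_
  rw [Measure.map_apply hX measurableSet_Iic, ugLaw_Iic hα hβ]
  exact hF x

theorem unitGompertz_stress_strength {Ω : Type*} [MeasureSpace Ω]
    [IsProbabilityMeasure (ℙ : Measure Ω)]
    (α₁ α₂ β : ℝ) (hα₁ : 0 < α₁) (hα₂ : 0 < α₂) (hβ : 0 < β)
    (X Y : Ω → ℝ) (hX : Measurable X) (hY : Measurable Y)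
    (hind : ProbabilityTheory.IndepFun X Y)
    (hFX : ∀ x : ℝ, ℙ {ω | X ω ≤ x} = ENNReal.ofReal (ugCDF α₁ β x))
    (hFY : ∀ x : ℝ, ℙ {ω | Y ω ≤ x} = ENNReal.ofReal (ugCDF α₂ β x)) :
    ℙ {ω | Y ω < X ω} = ENNReal.ofReal (α₁ / (α₁ + α₂)) := by
  have hpre : {ω | Y ω < X ω} = (fun ω => (X ω, Y ω)) ⁻¹' {p : ℝ × ℝ | p.2 < p.1} := rfl
  rw [hpre, ← Measure.map_apply (hX.prodMk hY) (measurableSet_lt measurable_snd measurable_fst),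
    (indepFun_iff_map_prod_eq_prod_map_map hX.aemeasurable hY.aemeasurable).mp hind,
    map_eq_ugLaw hα₁ hβ hX hFX, map_eq_ugLaw hα₂ hβ hY hFY]
  exact ugLaw_prod_setOf_snd_lt_fst hα₁ hα₂ hβ
end

section
/- If 0 < α₁ < α₂ and β > 0, then the likelihood ratio x ↦ f(x | α₁, β)/f(x | α₂, β) is strictly decreasing on (0,1); i.e., UG(α₁, β) is smaller than UG(α₂, β) in the likelihood ratio order. -/
open Real

theorem unitGompertz_likelihood_ratio_order (α₁ α₂ β : ℝ) (hα₁ : 0 < α₁)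
    (h12 : α₁ < α₂) (hβ : 0 < β) :
    StrictAntiOn (fun x : ℝ =>
        (α₁ * β * Real.exp (-α₁ * (1 / x ^ β - 1)) / x ^ (1 + β)) /
          (α₂ * β * Real.exp (-α₂ * (1 / x ^ β - 1)) / x ^ (1 + β)))
      (Set.Ioo (0:ℝ) 1) := by
  have hα₂ : 0 < α₂ := hα₁.trans h12
  have key : ∀ z ∈ Set.Ioo (0:ℝ) 1,
      (α₁ * β * Real.exp (-α₁ * (1 / z ^ β - 1)) / z ^ (1 + β)) /
        (α₂ * β * Real.exp (-α₂ * (1 / z ^ β - 1)) / z ^ (1 + β))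
        = (α₁ / α₂) * Real.exp ((α₂ - α₁) * (1 / z ^ β - 1)) := by
    intro z hz
    have hzp : (0:ℝ) < z ^ (1 + β) := Real.rpow_pos_of_pos hz.1 _
    have h1 : -α₁ * (1 / z ^ β - 1) =
        (α₂ - α₁) * (1 / z ^ β - 1) + -α₂ * (1 / z ^ β - 1) := by ring
    rw [h1, Real.exp_add]
    field_simp
  intro x hx y hy hxy
  show _ < _
  dsimp only
  rw [key x hx, key y hy]
  have hxb : x ^ β < y ^ β := Real.rpow_lt_rpow hx.1.le hxy hβ
  have hxbp : (0:ℝ) < x ^ β := Real.rpow_pos_of_pos hx.1 β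
  have h2 : 1 / y ^ β < 1 / x ^ β := one_div_lt_one_div_of_lt hxbp hxb
  have h3 : (α₂ - α₁) * (1 / y ^ β - 1) < (α₂ - α₁) * (1 / x ^ β - 1) := by
    apply mul_lt_mul_of_pos_left (by linarith) (by linarith)
  exact mul_lt_mul_of_pos_left (Real.exp_lt_exp.2 h3) (div_pos hα₁ hα₂)
end
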